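/- arXiv:cs/0510080 — 2 statements merged into one kernel-verified Lean document; each statement's English description precedes it below -/
import Mathlib

section
/- Let Y and X be random variables with finite value sets 𝒴 and 𝒳, let A be a finite nonempty set of actions, and L : 𝒴 × A → ℝ a loss function. Let Pr_Y be a probability distribution on 𝒴 and let 𝒫 be the set of all probability distributions on 𝒳 × 𝒴 whose marginal on 𝒴 equals Pr_Y. Let a* ∈ A minimize the expected loss E_{Pr_Y}[L(·, a)] over a ∈ A. Then the expected loss E_{Pr_Y}[L(·, a*)] equals the minimax value inf over all (randomized) decision rules δ : 𝒳 → Δ(A) of sup over Pr ∈ 𝒫 of E_Pr[L_δ], where L_δ(x,y) = Σ_{a∈A} δ(x)(a)·L(y,a). In particular, the constant decision rule choosing a* is minimax optimal. -/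
noncomputable section

/-- The constant decision rule playing an optimal action `astar`
for the marginal `PrY` is minimax optimal: its expected loss equals the
minimax value over all randomized decision rules against the set of all
joint distributions on `X × Y` with marginal `PrY` on `Y`. -/
theorem ignoring_is_minimax_optimal
    {X Y A : Type} [Fintype X] [Fintype Y] [Fintype A]
    [Nonempty X] [Nonempty Y] [Nonempty A]
    (L : Y → A → ℝ) (PrY : Y → ℝ)
    (hnn : ∀ y, 0 ≤ PrY y) (hsum : ∑ y, PrY y = 1)
    (astar : A)
    (hopt : ∀ a, ∑ y, PrY y * L y astar ≤ ∑ y, PrY y * L y a) :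
    ∑ y, PrY y * L y astar =
      ⨅ δ : {δ : X → A → ℝ // (∀ x a, 0 ≤ δ x a) ∧ ∀ x, ∑ a, δ x a = 1},
        ⨆ Pr : {Pr : X × Y → ℝ //
            (∀ z, 0 ≤ Pr z) ∧ (∑ z, Pr z = 1) ∧ ∀ y, ∑ x, Pr (x, y) = PrY y},
          ∑ z : X × Y, Pr.1 z * ∑ a, δ.1 z.1 a * L z.2 a := by
  classical
  obtain ⟨x0⟩ := (inferInstance : Nonempty X)
  set V := ∑ y, PrY y * L y astar with hV
  set D := {δ : X → A → ℝ // (∀ x a, 0 ≤ δ x a) ∧ ∀ x, ∑ a, δ x a = 1} with hD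
  set P := {Pr : X × Y → ℝ //
      (∀ z, 0 ≤ Pr z) ∧ (∑ z, Pr z = 1) ∧ ∀ y, ∑ x, Pr (x, y) = PrY y} with hP
  set g : D → P → ℝ := fun δ Pr => ∑ z : X × Y, Pr.1 z * ∑ a, δ.1 z.1 a * L z.2 a with hg
  -- constant rule
  have hδc1 : ∀ (x : X) (a : A), (0:ℝ) ≤ if a = astar then 1 else 0 := by
    intro x a; split <;> norm_num
  let δc : D := ⟨fun _ a => if a = astar then 1 else 0, fun x a => hδc1 x a,
    fun x => by simp⟩
  -- point-mass joint distribution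
  have hPr0nn : ∀ z : X × Y, (0:ℝ) ≤ if z.1 = x0 then PrY z.2 else 0 := by
    intro z
    split
    · exact hnn z.2
    · exact le_rfl
  have hPr0sum : ∑ z : X × Y, (if z.1 = x0 then PrY z.2 else 0) = 1 := by
    rw [Fintype.sum_prod_type]
    have h : ∀ x : X, ∑ y, (if x = x0 then PrY y else 0) = if x = x0 then 1 else 0 := by
      intro x; split <;> simp [hsum]
    simp [h]
  have hPr0marg : ∀ y : Y, ∑ x : X, (if (x, y).1 = x0 then PrY (x, y).2 else 0) = PrY y := by
    intro y; simp
  let Pr0 : P := ⟨fun z => if z.1 = x0 then PrY z.2 else 0, hPr0nn, hPr0sum, hPr0marg⟩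
  haveI : Nonempty P := ⟨Pr0⟩
  haveI : Nonempty D := ⟨δc⟩
  -- upper bound on everything
  obtain ⟨_⟩ := (inferInstance : Nonempty Y)
  obtain ⟨_⟩ := (inferInstance : Nonempty A)
  set M := Finset.univ.sup' Finset.univ_nonempty (fun p : Y × A => L p.1 p.2) with hM
  have hLM : ∀ y a, L y a ≤ M := fun y a => Finset.le_sup' (fun p : Y × A => L p.1 p.2) (Finset.mem_univ (y, a))
  have inner_le : ∀ (δ : D) (x : X) (y : Y), ∑ a, δ.1 x a * L y a ≤ M := by
    intro δ x y
    calc ∑ a, δ.1 x a * L y a ≤ ∑ a, δ.1 x a * M :=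
          Finset.sum_le_sum fun a _ => mul_le_mul_of_nonneg_left (hLM y a) (δ.2.1 x a)
      _ = M := by rw [← Finset.sum_mul, δ.2.2 x, one_mul]
  have gle : ∀ (δ : D) (Pr : P), g δ Pr ≤ M := by
    intro δ Pr
    calc g δ Pr ≤ ∑ z : X × Y, Pr.1 z * M :=
          Finset.sum_le_sum fun z _ =>
            mul_le_mul_of_nonneg_left (inner_le δ z.1 z.2) (Pr.2.1 z)
      _ = M := by rw [← Finset.sum_mul, Pr.2.2.1, one_mul]
  have bddA : ∀ δ : D, BddAbove (Set.range (g δ)) := fun δ =>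
    ⟨M, by rintro r ⟨Pr, rfl⟩; exact gle δ Pr⟩
  -- the constant rule achieves V against every Pr
  have keyA : ∀ Pr : P, g δc Pr = V := by
    intro Pr
    have h1 : ∀ z : X × Y, (∑ a, δc.1 z.1 a * L z.2 a) = L z.2 astar := by
      intro z
      show (∑ a, (if a = astar then (1:ℝ) else 0) * L z.2 a) = L z.2 astar
      simp [ite_mul]
    calc g δc Pr = ∑ z : X × Y, Pr.1 z * L z.2 astar := by
          show (∑ z : X × Y, _ * ∑ a, _) = _; exact Finset.sum_congr rfl fun z _ => by rw [h1]
      _ = ∑ y, (∑ x, Pr.1 (x, y)) * L y astar := by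
          rw [Fintype.sum_prod_type, Finset.sum_comm]
          simp [Finset.sum_mul]
      _ = V := by
          rw [hV]; exact Finset.sum_congr rfl fun y _ => by rw [Pr.2.2.2 y]
  -- any rule suffers at least V against Pr0
  have keyB : ∀ δ : D, V ≤ g δ Pr0 := by
    intro δ
    have h1 : g δ Pr0 = ∑ y, PrY y * ∑ a, δ.1 x0 a * L y a := by
      show (∑ z : X × Y, _ * ∑ a, _) = _
      show (∑ z : X × Y, (if z.1 = x0 then PrY z.2 else 0) * ∑ a, δ.1 z.1 a * L z.2 a) = _
      rw [Fintype.sum_prod_type]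
      simp [ite_mul, Finset.sum_ite_eq]
    have h2 : g δ Pr0 = ∑ a, δ.1 x0 a * ∑ y, PrY y * L y a := by
      rw [h1]
      simp_rw [Finset.mul_sum]
      rw [Finset.sum_comm]
      exact Finset.sum_congr rfl fun a _ =>
        Finset.sum_congr rfl fun y _ => by ring
    rw [h2]
    calc V = ∑ a, δ.1 x0 a * V := by rw [← Finset.sum_mul, δ.2.2 x0, one_mul]
      _ ≤ ∑ a, δ.1 x0 a * ∑ y, PrY y * L y a :=
          Finset.sum_le_sum fun a _ => mul_le_mul_of_nonneg_left (hopt a) (δ.2.1 x0 a)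
  show V = ⨅ δ : D, ⨆ Pr : P, g δ Pr
  have hlow : ∀ δ : D, V ≤ ⨆ Pr : P, g δ Pr := fun δ =>
    (keyB δ).trans (le_ciSup (bddA δ) Pr0)
  have h2 : V ≤ ⨅ δ : D, ⨆ Pr : P, g δ Pr := le_ciInf hlow
  have h1 : (⨅ δ : D, ⨆ Pr : P, g δ Pr) ≤ V := by
    have hc : (⨆ Pr : P, g δc Pr) = V := by
      rw [iSup_congr keyA, ciSup_const]
    exact (ciInf_le ⟨V, by rintro r ⟨δ, rfl⟩; exact hlow δ⟩ δc).trans hc.le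
  exact le_antisymm h2 h1
end
end

section
/- With the Pr_{α,β} parameterization (Pr_Y(Y=1)=p, 0<p<1) and the uniform prior on [0,1]², extend to two i.i.d. observations: Pr²_{α,β}((x₁,y₁),(x₂,y₂)) = Pr_{α,β}(x₁,y₁)·Pr_{α,β}(x₂,y₂), and let Pr̄² be its integral against the uniform prior. Then Pr̄²(Y₂=1 | X₂=1, (X₁,Y₁)=(1,1)) = 4p/(p+3). -/
open MeasureTheory intervalIntegral

noncomputable section

def prab (p α β : ℝ) : Fin 2 × Fin 2 → ℝ := fun z =>
  if z.1 = 1 then (if z.2 = 1 then p * α else (1 - p) * β)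
  else (if z.2 = 1 then p * (1 - α) else (1 - p) * (1 - β))

/-- with two i.i.d. observations and the uniform prior on
`(α,β) ∈ [0,1]²`, the Bayesian predictive probability
`Pr̄²(Y₂=1 | X₂=1, (X₁,Y₁)=(1,1))` equals `4p/(p+3)`. The conditional
probability is the ratio of the integrated likelihoods of the two completions
`(X₂,Y₂) = (1,1)` and `(X₂,Y₂) = (1,0)` of the data `(X₁,Y₁) = (1,1)`. -/
theorem bayes_posterior_after_one_observation (p : ℝ) (hp0 : 0 < p) (hp1 : p < 1) :
    (∫ α in (0:ℝ)..1, ∫ β in (0:ℝ)..1, prab p α β (1, 1) * prab p α β (1, 1)) /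
      ((∫ α in (0:ℝ)..1, ∫ β in (0:ℝ)..1, prab p α β (1, 1) * prab p α β (1, 1)) +
       (∫ α in (0:ℝ)..1, ∫ β in (0:ℝ)..1, prab p α β (1, 1) * prab p α β (1, 0)))
    = 4 * p / (p + 3) := by
  have e1 : (∫ α in (0:ℝ)..1, ∫ β in (0:ℝ)..1, prab p α β (1, 1) * prab p α β (1, 1))
      = p^2/3 := by
    simp only [prab]
    norm_num
    have : ∀ α : ℝ, p * α * (p * α) = p^2 * α^2 := fun α => by ring
    rw [intervalIntegral.integral_congr (fun α _ => this α),
      intervalIntegral.integral_const_mul]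
    norm_num [integral_pow]
    ring
  have e2 : (∫ α in (0:ℝ)..1, ∫ β in (0:ℝ)..1, prab p α β (1, 1) * prab p α β (1, 0))
      = p*(1-p)/4 := by
    simp only [prab]
    norm_num
    rw [intervalIntegral.integral_const_mul, intervalIntegral.integral_const_mul,
      integral_id]
    norm_num
    ring
  rw [e1, e2]
  have h3 : p + 3 ≠ 0 := by nlinarith
  have hp : p ≠ 0 := hp0.ne'
  have : p^2/3 + p*(1-p)/4 = p*(p+3)/12 := by ring
  rw [this, div_div_eq_mul_div, div_eq_div_iff (by positivity) h3]
  ring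
end
end
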